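/- Factorial-decay bound for elementary symmetric polynomials on the probability simplex: for every integer t with 0 ≤ t ≤ r − 1, the (t+1)-st elementary symmetric polynomial satisfies a_{t+1} ≤ (1 / (t+1)!) · (1 − t/r). -/

import Mathlib

/-!
Write `e_k` for the elementary symmetric polynomials of `p` and `e_k⁽ⁱ⁾` for those of `p` with
the `i`-th entry removed. Double counting gives `∑ᵢ e_n⁽ⁱ⁾ = (r - n) e_n`, and with Pascal's rule
`e_{n+1} = e_{n+1}⁽ⁱ⁾ + pᵢ e_n⁽ⁱ⁾` also `(n + 1) e_{n+1} = ∑ᵢ pᵢ e_n⁽ⁱ⁾`. Pascal's rule once more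
gives `e_n⁽ⁱ⁾ - e_n⁽ʲ⁾ = (pⱼ - pᵢ) e_{n-1}⁽ⁱʲ⁾`, so `p` and `i ↦ e_n⁽ⁱ⁾` are oppositely ordered and
Chebyshev's sum inequality yields `r (n + 1) e_{n+1} ≤ (r - n) e_1 e_n`. Combined with
`n! e_n ≤ e_1ⁿ` this is `(n + 1)! e_{n+1} ≤ (1 - n / r) e_1ⁿ⁺¹`.
-/

open Finset Nat

theorem Multiset.esymm_cons_succ {R : Type*} [CommSemiring R] (a : R) (s : Multiset R) (n : ℕ) :
    (a ::ₘ s).esymm (n + 1) = s.esymm (n + 1) + a * s.esymm n := by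
  simp [Multiset.esymm, Multiset.map_map, Multiset.sum_map_mul_left]

namespace Finset

variable {ι R : Type*}

theorem esymm_map_val_nonneg [CommSemiring R] [PartialOrder R] [IsOrderedRing R] {p : ι → R}
    (hp : 0 ≤ p) (s : Finset ι) (n : ℕ) : 0 ≤ (s.val.map p).esymm n := by
  rw [esymm_map_val]
  exact sum_nonneg fun T _ => prod_nonneg fun i _ => hp i

theorem esymm_map_val_mono [CommSemiring R] [PartialOrder R] [IsOrderedRing R] {p : ι → R}
    (hp : 0 ≤ p) {s t : Finset ι} (hst : s ⊆ t) (n : ℕ) :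
    (s.val.map p).esymm n ≤ (t.val.map p).esymm n := by
  simp only [esymm_map_val]
  exact sum_le_sum_of_subset_of_nonneg (powersetCard_mono hst)
    fun T _ _ => prod_nonneg fun i _ => hp i

theorem esymm_map_val_insert [DecidableEq ι] [CommSemiring R] (p : ι → R) {s : Finset ι}
    {j : ι} (hj : j ∉ s) (n : ℕ) :
    ((insert j s).val.map p).esymm (n + 1) =
      (s.val.map p).esymm (n + 1) + p j * (s.val.map p).esymm n := by
  rw [insert_val_of_notMem hj, Multiset.map_cons, Multiset.esymm_cons_succ]

variable [Fintype ι]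

section DecidableEq

variable [DecidableEq ι]

theorem sum_esymm_erase_add_mul_esymm [CommSemiring R] (p : ι → R) (n : ℕ) :
    ∑ i, ((univ.erase i).val.map p).esymm n + n * (univ.val.map p).esymm n =
      Fintype.card ι * (univ.val.map p).esymm n := by
  simp only [esymm_map_val]
  rw [sum_comm' (t' := powersetCard n univ) (s' := fun T => Tᶜ)
    (fun i T => by simp [mem_powersetCard, subset_erase]), mul_sum, mul_sum, ← sum_add_distrib]
  refine sum_congr rfl fun T hT => ?_
  rw [sum_const, nsmul_eq_mul, ← add_mul, ← Nat.cast_add, card_compl, ← (mem_powersetCard.1 hT).2,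
    Nat.sub_add_cancel T.card_le_univ]

theorem sum_mul_esymm_erase [CommRing R] (p : ι → R) (n : ℕ) :
    ∑ i, p i * ((univ.erase i).val.map p).esymm n = (n + 1) * (univ.val.map p).esymm (n + 1) := by
  have hpascal (i : ι) : (univ.val.map p).esymm (n + 1) =
      ((univ.erase i).val.map p).esymm (n + 1) + p i * ((univ.erase i).val.map p).esymm n := by
    rw [← esymm_map_val_insert p (notMem_erase i univ), insert_erase (mem_univ i)]
  have hsum : Fintype.card ι * (univ.val.map p).esymm (n + 1) =
      ∑ i, ((univ.erase i).val.map p).esymm (n + 1) +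
        ∑ i, p i * ((univ.erase i).val.map p).esymm n := by
    rw [← sum_add_distrib, ← sum_congr rfl fun i _ => hpascal i, sum_const, card_univ, nsmul_eq_mul]
  have hcount := sum_esymm_erase_add_mul_esymm p (n + 1)
  push_cast at hcount
  linear_combination -hsum - hcount

theorem antivary_esymm_erase [CommRing R] [LinearOrder R] [IsStrictOrderedRing R] {p : ι → R}
    (hp : 0 ≤ p) (n : ℕ) : Antivary (fun i => ((univ.erase i).val.map p).esymm n) p := by
  intro i j hij
  obtain _ | m := n
  · simp [Multiset.esymm]
  have hne : i ≠ j := by rintro rfl; exact hij.false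
  set s := (univ.erase i).erase j
  have hi : univ.erase i = insert j s := (insert_erase (mem_erase.2 ⟨hne.symm, mem_univ j⟩)).symm
  have hj : univ.erase j = insert i s := by
    rw [show s = (univ.erase j).erase i from erase_right_comm,
      insert_erase (mem_erase.2 ⟨hne, mem_univ i⟩)]
  dsimp only
  rw [hi, hj, esymm_map_val_insert p (by simp [s]), esymm_map_val_insert p (by simp [s])]
  gcongr
  exact esymm_map_val_nonneg hp s m

end DecidableEq

theorem card_mul_succ_mul_esymm_le [CommRing R] [LinearOrder R] [IsStrictOrderedRing R]
    {p : ι → R} (hp : 0 ≤ p) (n : ℕ) :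
    Fintype.card ι * ((n + 1) * (univ.val.map p).esymm (n + 1)) ≤
      (∑ i, p i) * ((Fintype.card ι - n) * (univ.val.map p).esymm n) := by
  classical
  have hcheb := (antivary_esymm_erase hp n).card_mul_sum_le_sum_mul_sum
  have hcount := sum_esymm_erase_add_mul_esymm p n
  simp only [mul_comm _ (p _), sum_mul_esymm_erase] at hcheb
  rw [eq_sub_of_add_eq hcount] at hcheb
  linear_combination hcheb

theorem succ_mul_esymm_le [CommRing R] [PartialOrder R] [IsOrderedRing R] {p : ι → R}
    (hp : 0 ≤ p) (n : ℕ) :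
    (n + 1) * (univ.val.map p).esymm (n + 1) ≤ (∑ i, p i) * (univ.val.map p).esymm n := by
  classical
  rw [← sum_mul_esymm_erase, sum_mul]
  gcongr with i
  · exact hp i
  · exact esymm_map_val_mono hp (erase_subset i univ) n

theorem factorial_mul_esymm_le_pow_sum [CommRing R] [PartialOrder R] [IsOrderedRing R]
    {p : ι → R} (hp : 0 ≤ p) (n : ℕ) :
    n ! * (univ.val.map p).esymm n ≤ (∑ i, p i) ^ n := by
  have hsum : 0 ≤ ∑ i, p i := sum_nonneg fun i _ => hp i
  induction n with
  | zero => simp [Multiset.esymm]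
  | succ n ih =>
    calc ((n + 1)! : R) * (univ.val.map p).esymm (n + 1)
        = n ! * ((n + 1) * (univ.val.map p).esymm (n + 1)) := by
          push_cast [Nat.factorial_succ]; ring
      _ ≤ n ! * ((∑ i, p i) * (univ.val.map p).esymm n) :=
        mul_le_mul_of_nonneg_left (succ_mul_esymm_le hp n) (by positivity)
      _ = (∑ i, p i) * (n ! * (univ.val.map p).esymm n) := by ring
      _ ≤ (∑ i, p i) * (∑ i, p i) ^ n := by gcongr
      _ = (∑ i, p i) ^ (n + 1) := by ring

theorem card_mul_factorial_mul_esymm_le [CommRing R] [LinearOrder R] [IsStrictOrderedRing R]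
    {p : ι → R} (hp : 0 ≤ p) {n : ℕ} (hn : n ≤ Fintype.card ι) :
    Fintype.card ι * ((n + 1)! * (univ.val.map p).esymm (n + 1)) ≤
      (Fintype.card ι - n) * (∑ i, p i) ^ (n + 1) := by
  have hsum : 0 ≤ ∑ i, p i := sum_nonneg fun i _ => hp i
  have hcard : (0 : R) ≤ Fintype.card ι - n := sub_nonneg.2 (by exact_mod_cast hn)
  calc (Fintype.card ι : R) * ((n + 1)! * (univ.val.map p).esymm (n + 1))
      = n ! * (Fintype.card ι * ((n + 1) * (univ.val.map p).esymm (n + 1))) := by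
        push_cast [Nat.factorial_succ]; ring
    _ ≤ n ! * ((∑ i, p i) * ((Fintype.card ι - n) * (univ.val.map p).esymm n)) :=
        mul_le_mul_of_nonneg_left (card_mul_succ_mul_esymm_le hp n) (by positivity)
    _ = (Fintype.card ι - n) * (∑ i, p i) * (n ! * (univ.val.map p).esymm n) := by ring
    _ ≤ (Fintype.card ι - n) * (∑ i, p i) * (∑ i, p i) ^ n := by
        gcongr
        exact factorial_mul_esymm_le_pow_sum hp n
    _ = (Fintype.card ι - n) * (∑ i, p i) ^ (n + 1) := by ring

end Finset

theorem esymm_factorial_decay_general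
    (r t : ℕ) (htr : t + 1 ≤ r)
    (p : Fin r → ℝ) (hp : ∀ j, 0 ≤ p j) (hpsum : ∑ j, p j = 1)
    (a : ℕ → ℝ)
    (ha : ∀ n, a n = ∑ S ∈ Finset.powersetCard n (Finset.univ : Finset (Fin r)),
      ∏ j ∈ S, p j) :
    a (t + 1) ≤ (1 / ((t + 1).factorial : ℝ)) * (1 - (t : ℝ) / (r : ℝ)) := by
  have hbound :=
    card_mul_factorial_mul_esymm_le (n := t) (p := p) hp (by rw [Fintype.card_fin]; omega)
  rw [esymm_map_val, ← ha, hpsum, one_pow, Fintype.card_fin] at hbound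
  have hr : (0 : ℝ) < r := by exact_mod_cast (show 0 < r by omega)
  rw [show 1 / ((t + 1)! : ℝ) * (1 - t / r) = (r - t) / ((t + 1)! * r) by field_simp,
    le_div_iff₀ (by positivity)]
  linarith

/-- Factorial-decay bound for elementary symmetric polynomials on the
probability simplex: for `0 ≤ t ≤ r - 1`,
`a (t+1) ≤ (1 / (t+1)!) * (1 - t/r)`. -/
theorem esymm_factorial_decay
    (r t : ℕ) (hr : 1 ≤ r) (htr : t + 1 ≤ r)
    (p : Fin r → ℝ) (hp : ∀ j, 0 ≤ p j) (hpsum : ∑ j, p j = 1)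
    (a : ℕ → ℝ)
    (ha : ∀ n, a n = ∑ S ∈ Finset.powersetCard n (Finset.univ : Finset (Fin r)),
      ∏ j ∈ S, p j) :
    a (t + 1) ≤ (1 / ((t + 1).factorial : ℝ)) * (1 - (t : ℝ) / (r : ℝ)) :=
  esymm_factorial_decay_general r t htr p hp hpsum a ha
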